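/- Let G be a connected graph, u and v true twins in G, and T, T' search trees on G. Then every shortest path from T to T' in the rotation graph R(G) contains exactly one edge given by a uv-rotation if u and v have different relative order in T and T', and contains no uv-rotation edge if u and v have the same relative order in T and T'. -/

import Mathlib

open scoped Classical

universe u

variable {V : Type u}

/-- A rooted tree structure on a support set: data only, well-formedness is `RTree.WF`. -/
structure RTree (V : Type u) where
  supp : Set V
  root : V
  parent : V → Option V

namespace RTree

def parentRel (T : RTree V) (a b : V) : Prop := T.parent a = some b

/-- `u` is an ancestor of `v` in `T` (reflexively). -/
def isAncestor (T : RTree V) (u v : V) : Prop :=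
  Relation.ReflTransGen T.parentRel v u

def WF (T : RTree V) : Prop :=
  T.root ∈ T.supp ∧
  T.parent T.root = none ∧
  (∀ v, v ∉ T.supp → T.parent v = none) ∧
  (∀ v ∈ T.supp, v ≠ T.root → ∃ u ∈ T.supp, T.parent v = some u) ∧
  (∀ v ∈ T.supp, T.isAncestor T.root v)

/-- The vertex set of the subtree `T|c` rooted at `c`. -/
def descendants (T : RTree V) (c : V) : Set V :=
  {v | v ∈ T.supp ∧ T.isAncestor c v}

/-- Iterated parent. -/
def pIter (T : RTree V) : ℕ → V → Option V
  | 0, w => some w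
  | n + 1, w => (T.parent w).bind (T.pIter n)

/-- The depth `d_{T,v}` of `v` in `T` (distance to the root). -/
noncomputable def depthOf (T : RTree V) (v : V) : ℕ :=
  sInf {n | T.pIter n v = some T.root}

/-- The subtree of `T` rooted at `c`. -/
noncomputable def subtreeAt (T : RTree V) (c : V) : RTree V where
  supp := T.descendants c
  root := c
  parent := fun w => if w = c then none else if w ∈ T.descendants c then T.parent w else none

/-- The vertex at depth `i` on the path from the root to `v`. -/
noncomputable def ancAt (T : RTree V) (v : V) (i : ℕ) : V :=
  (T.pIter (T.depthOf v - i) v).getD T.root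

/-- Insertion `T(i,x,v)` of a new vertex `x` at depth `i` along the root-to-`v` path:
`i = 0` makes `x` the new root, `i = d_{T,v}+1` adds `x` as a new child of `v`, and
for `1 ≤ i ≤ d_{T,v}` the `i`-th edge of the root-to-`v` path is subdivided by `x`. -/
noncomputable def insertAt (T : RTree V) (i : ℕ) (x v : V) : RTree V :=
  if i = 0 then
    { supp := insert x T.supp
      root := x
      parent := fun w => if w = x then none else if w = T.root then some x else T.parent w }
  else if i = T.depthOf v + 1 then
    { supp := insert x T.supp
      root := T.root
      parent := fun w => if w = x then some v else T.parent w }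
  else
    { supp := insert x T.supp
      root := T.root
      parent := fun w =>
        if w = x then some (T.ancAt v (i - 1))
        else if w = T.ancAt v i then some x
        else T.parent w }

/-- Elimination `p(T,x)` of a vertex `x` (meaningful when `x` has at most one child). -/
noncomputable def elim (T : RTree V) (x : V) : RTree V where
  supp := T.supp \ {x}
  root :=
    if T.root = x then (if h : ∃ w, T.parent w = some x then h.choose else T.root) else T.root
  parent := fun w =>
    if w = x then none
    else if T.parent w = some x then T.parent x
    else T.parent w

end RTree

/-- Reachability inside the vertex set `s`, i.e. in the induced subgraph `G[s]`. -/
def reachWithin (G : SimpleGraph V) (s : Set V) : V → V → Prop :=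
  Relation.ReflTransGen (fun a b => a ∈ s ∧ b ∈ s ∧ G.Adj a b)

/-- Recursive definition of a search tree: the children of the root are the roots of
search trees on the connected components of the graph minus the root. -/
inductive IsSearchTreeRec {V : Type u} (G : SimpleGraph V) : RTree V → Prop
  | intro (T : RTree V) (hwf : T.WF)
      (hconn : ∀ a ∈ T.supp, ∀ b ∈ T.supp, reachWithin G T.supp a b)
      (hcomp : ∀ c, T.parent c = some T.root →
        ∀ w, w ∈ T.descendants c ↔
          (w ∈ T.supp ∧ w ≠ T.root ∧ reachWithin G (T.supp \ {T.root}) c w))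
      (hrec : ∀ c, T.parent c = some T.root → IsSearchTreeRec G (T.subtreeAt c)) :
      IsSearchTreeRec G T

/-- `T` is a search tree on the induced subgraph `G[s]`. -/
def IsSearchTreeOn (G : SimpleGraph V) (s : Set V) (T : RTree V) : Prop :=
  T.supp = s ∧ IsSearchTreeRec G T

/-- `T` is a search tree on `G`. -/
def IsSearchTree (G : SimpleGraph V) (T : RTree V) : Prop :=
  IsSearchTreeOn G Set.univ T

/-- The `uv`-rotation of `T` (for `v` a child of `u`): `u` becomes a child of `v`, `v` takes
`u`'s old parent, and each subtree `S` of `v` is reattached below `u` iff `u` has a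
`G`-neighbour in `S`. -/
noncomputable def rotate (G : SimpleGraph V) (T : RTree V) (u v : V) : RTree V where
  supp := T.supp
  root := if T.root = u then v else T.root
  parent := fun w =>
    if w = v then T.parent u
    else if w = u then some v
    else if T.parent w = some v then
      (if ∃ z ∈ T.descendants w, G.Adj u z then some u else some v)
    else T.parent w

def IsRotation (G : SimpleGraph V) (S S' : RTree V) : Prop :=
  ∃ u v, S.parent v = some u ∧ S' = rotate G S u v

def rotAdj (G : SimpleGraph V) (S S' : RTree V) : Prop :=
  S ≠ S' ∧ (IsRotation G S S' ∨ IsRotation G S' S)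

/-- The rotation graph of the induced subgraph `G[s]`: vertices are the search trees on
`G[s]`, two trees being adjacent iff they differ by a single rotation. -/
def rotationGraphOn (G : SimpleGraph V) (s : Set V) :
    SimpleGraph {T : RTree V // IsSearchTreeOn G s T} where
  Adj T T' := rotAdj G T.1 T'.1
  symm := ⟨fun T T' h => ⟨Ne.symm h.1, Or.symm h.2⟩⟩
  loopless := ⟨fun T h => h.1 rfl⟩

/-- A vertex of `K` of maximal depth in `T` (the vertex `v_{λ(T)}`). -/
noncomputable def deepestIn (T : RTree V) (K : Set V) : V :=
  if h : ∃ u, u ∈ K ∧ ∀ w ∈ K, T.depthOf w ≤ T.depthOf u then h.choose else T.root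

/-- `u` and `v` have different relative order in `T` and `T'`. -/
def diffRelOrder (T T' : RTree V) (u v : V) : Prop :=
  (T.isAncestor u v ∧ ¬ T'.isAncestor u v) ∨ (¬ T.isAncestor u v ∧ T'.isAncestor u v)

/-- The step from `S` to `S'` is a rotation of the pair `u`, `v`. -/
def isUVStep (G : SimpleGraph V) (u v : V) (S S' : RTree V) : Prop :=
  (S.parent v = some u ∧ S' = rotate G S u v) ∨ (S.parent u = some v ∧ S' = rotate G S v u)

/-- A threshold graph: obtainable from the one-vertex graph by repeatedly adding either an
isolated vertex or a universal vertex. -/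
def IsThresholdGraph {V : Type u} [Fintype V] (G : SimpleGraph V) : Prop :=
  ∃ e : Fin (Fintype.card V) ≃ V,
    ∀ i : Fin (Fintype.card V),
      (∀ j, j < i → ¬ G.Adj (e i) (e j)) ∨ (∀ j, j < i → G.Adj (e i) (e j))

/-- The complete split graph `SPK_{p,q}`: a clique of size `p` completely joined to an
independent set of size `q`. -/
def completeSplitGraph (p q : ℕ) : SimpleGraph (Fin p ⊕ Fin q) where
  Adj a b := a ≠ b ∧ (a.isLeft = true ∨ b.isLeft = true)
  symm := ⟨fun a b h => ⟨Ne.symm h.1, Or.symm h.2⟩⟩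
  loopless := ⟨fun a h => h.1 rfl⟩

/-! Swapping the true twins `u` and `v` is an automorphism of `G`, so it maps search trees to
search trees and rotations to rotations. When `v` is a child of `u`, it is the only one (a second
child would have a neighbour of `u`, hence of `v`, below it), so the `uv`-rotation just exchanges
the labels `u` and `v` and flips their relative order. A rotation at any other tree edge `a b`
keeps `u` above `v`: upward paths survive except that `a` may be bypassed, and for `a = u` the
subtree containing `v` is reattached below `u` because `u` is adjacent to `v`. So the relative
order flips exactly at the `uv`-rotations, and a shortest path has at most one of them: the swap
applied to the segment between two of them gives a walk that is two steps shorter. -/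

open Relation

namespace RTree

theorem ext {S T : RTree V} (hsupp : S.supp = T.supp) (hroot : S.root = T.root)
    (hparent : S.parent = T.parent) : S = T := by
  cases S; cases T; cases hsupp; cases hroot; cases hparent; rfl

theorem parentRel_rightUnique (S : RTree V) : Relator.RightUnique S.parentRel :=
  fun _ _ _ hy hz => Option.some.inj (hy.symm.trans hz)

theorem parentRel_of_reflTransGen_of_ne {S : RTree V} {x y p : V}
    (h : ReflTransGen S.parentRel x y) (hxy : x ≠ y) (hp : S.parentRel x p) :
    ReflTransGen S.parentRel p y := by
  rcases h.cases_head with rfl | ⟨c, hc, hcy⟩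
  · exact absurd rfl hxy
  · rwa [S.parentRel_rightUnique hp hc]

namespace WF

variable {S : RTree V} (hS : S.WF)
include hS

theorem mem_of_parentRel {x y : V} (h : S.parentRel x y) : x ∈ S.supp := by
  by_contra hx
  rw [parentRel, hS.2.2.1 x hx] at h
  exact nomatch h

theorem not_transGen_self (x : V) : ¬ TransGen S.parentRel x x := by
  intro hx
  obtain ⟨y, hxy, -⟩ := TransGen.head'_iff.1 hx
  have hroot : ReflTransGen S.parentRel x S.root := hS.2.2.2.2 x (hS.mem_of_parentRel hxy)
  clear hxy
  induction hroot using ReflTransGen.head_induction_on with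
  | refl =>
    obtain ⟨y, hy, -⟩ := TransGen.head'_iff.1 hx
    rw [parentRel, hS.2.1] at hy
    exact nomatch hy
  | head hxp _ ih =>
    obtain ⟨y, hxy, hyx⟩ := TransGen.head'_iff.1 hx
    rw [S.parentRel_rightUnique hxy hxp] at hyx
    exact ih (TransGen.tail' hyx hxp)

theorem parentRel_irrefl (x : V) : ¬ S.parentRel x x :=
  fun h => hS.not_transGen_self x (TransGen.single h)

theorem eq_of_reflTransGen_of_reflTransGen {x y : V} (hxy : ReflTransGen S.parentRel x y)
    (hyx : ReflTransGen S.parentRel y x) : x = y := by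
  by_contra hne
  rcases hxy.cases_head with rfl | ⟨c, hc, hcy⟩
  · exact hne rfl
  · exact hS.not_transGen_self x (TransGen.head' hc (hcy.trans hyx))

theorem mem_of_parentRel_right {x y : V} (h : S.parentRel x y) :
    y ∈ S.supp := by
  have hx := hS.mem_of_parentRel h
  by_cases hxr : x = S.root
  · rw [hxr, parentRel, hS.2.1] at h
    exact nomatch h
  · obtain ⟨p, hp, hxp⟩ := hS.2.2.2.1 x hx hxr
    rwa [S.parentRel_rightUnique h hxp]

theorem exists_parent_eq_root_of_mem {x : V} (hx : x ∈ S.supp)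
    (hxr : x ≠ S.root) : ∃ c, S.parent c = some S.root ∧ x ∈ S.descendants c := by
  rcases (hS.2.2.2.2 x hx).cases_tail with h | ⟨c, hxc, hc⟩
  · exact absurd h.symm hxr
  · exact ⟨c, hc, hx, hxc⟩

theorem eq_of_reflTransGen_of_parentRel {x y p : V}
    (hx : S.parentRel x p) (hy : S.parentRel y p) (hxy : ReflTransGen S.parentRel x y) :
    x = y := by
  by_contra hne
  exact hS.not_transGen_self p (TransGen.tail' (parentRel_of_reflTransGen_of_ne hxy hne hx) hy)

end WF

variable {S : RTree V}

theorem subtreeAt_parent_of_mem {c w : V} (hw : w ∈ S.descendants c) (hwc : w ≠ c) :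
    (S.subtreeAt c).parent w = S.parent w := by
  simp [subtreeAt, hwc, hw]

theorem parentRel_of_subtreeAt {c x y : V} (h : (S.subtreeAt c).parentRel x y) :
    S.parentRel x y := by
  simp only [parentRel, subtreeAt] at h
  split_ifs at h
  exact h

theorem isAncestor_of_subtreeAt {c x y : V} (h : (S.subtreeAt c).isAncestor x y) :
    S.isAncestor x y :=
  ReflTransGen.mono (fun _ _ => parentRel_of_subtreeAt) _ _ h

theorem descendants_subtreeAt_subset (c x : V) :
    (S.subtreeAt c).descendants x ⊆ S.descendants x :=
  fun _ hz => ⟨hz.1.1, isAncestor_of_subtreeAt hz.2⟩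

variable {W : Type*}

def map (e : V ≃ W) (S : RTree V) : RTree W where
  supp := e '' S.supp
  root := e S.root
  parent w := (S.parent (e.symm w)).map e

section Map

variable (e : V ≃ W) (S : RTree V)

@[simp]
theorem map_root : (S.map e).root = e S.root := rfl

@[simp]
theorem map_parent_apply (x : V) : (S.map e).parent (e x) = (S.parent x).map e := by
  simp [map]

@[simp]
theorem mem_map_supp {x : V} : e x ∈ (S.map e).supp ↔ x ∈ S.supp :=
  e.injective.mem_set_image

@[simp]
theorem map_parentRel_iff {x y : V} : (S.map e).parentRel (e x) (e y) ↔ S.parentRel x y := by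
  simp [parentRel]

@[simp]
theorem map_isAncestor_iff {x y : V} : (S.map e).isAncestor (e x) (e y) ↔ S.isAncestor x y := by
  refine ⟨fun h => ?_, fun h => ReflTransGen.lift e (fun a b => (S.map_parentRel_iff e).2) _ _ h⟩
  have := ReflTransGen.lift (p := S.parentRel) e.symm (fun a b hab => ?_) _ _ h
  · simpa [isAncestor, Function.onFun] using this
  · simpa using (S.map_parentRel_iff e (x := e.symm a) (y := e.symm b)).1 (by simpa using hab)

@[simp]
theorem mem_map_descendants_iff {c x : V} :
    e x ∈ (S.map e).descendants (e c) ↔ x ∈ S.descendants c := by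
  simp [descendants]

theorem map_subtreeAt (c : V) : (S.subtreeAt c).map e = (S.map e).subtreeAt (e c) := by
  refine ext (Set.ext fun w => ?_) rfl (funext fun w => ?_)
  · obtain ⟨w, rfl⟩ := e.surjective w
    simp [subtreeAt]
  · obtain ⟨w, rfl⟩ := e.surjective w
    simp only [map_parent_apply, subtreeAt, e.apply_eq_iff_eq, mem_map_descendants_iff]
    split_ifs <;> rfl

theorem map_symm_map : (S.map e).map e.symm = S := by
  refine ext ?_ (by simp) (funext fun x => ?_)
  · simp [map]
  · simp [map, Option.map_map]

end Map

theorem WF.map {S : RTree V} (hS : S.WF) (e : V ≃ W) : (S.map e).WF := by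
  obtain ⟨hroot, hroot_parent, hnone, hsome, hreach⟩ := hS
  refine ⟨by simpa using hroot, by simpa using hroot_parent, fun w hw => ?_, fun w hw hwr => ?_,
    fun w hw => ?_⟩ <;> obtain ⟨x, rfl⟩ := e.surjective w
  · simp [hnone x (by simpa using hw)]
  · obtain ⟨p, hp, hxp⟩ := hsome x (by simpa using hw) (by simpa using hwr)
    exact ⟨e p, by simpa using hp, by simp [hxp]⟩
  · simpa using hreach x (by simpa using hw)

end RTree

section GraphIso

variable {W : Type*} {G : SimpleGraph V} {G' : SimpleGraph W}

theorem reachWithin_image_iff (e : G ≃g G') {s : Set V} {a b : V} :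
    reachWithin G' (e '' s) (e a) (e b) ↔ reachWithin G s a b := by
  refine ⟨fun h => ?_, fun h => ReflTransGen.lift e (fun x y hxy => ?_) _ _ h⟩
  · have := ReflTransGen.lift (p := fun x y => x ∈ s ∧ y ∈ s ∧ G.Adj x y) e.symm
      (fun x y hxy => ?_) _ _ h
    · simpa [reachWithin, Function.onFun] using this
    · obtain ⟨hx, hy, hxy⟩ := hxy
      obtain ⟨x, rfl⟩ := e.surjective x
      obtain ⟨y, rfl⟩ := e.surjective y
      simp only [Function.onFun, RelIso.symm_apply_apply]
      exact ⟨e.injective.mem_set_image.1 hx, e.injective.mem_set_image.1 hy, e.map_adj_iff.1 hxy⟩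
  · obtain ⟨hx, hy, hxy⟩ := hxy
    exact ⟨Set.mem_image_of_mem e hx, Set.mem_image_of_mem e hy, e.map_adj_iff.2 hxy⟩

theorem IsSearchTreeRec.map (e : G ≃g G') {S : RTree V} (hS : IsSearchTreeRec G S) :
    IsSearchTreeRec G' (S.map e.toEquiv) := by
  induction hS with
  | intro S hwf hconn hcomp _ ih =>
    have hsupp : (S.map e.toEquiv).supp = e '' S.supp := rfl
    have hsupp_root : (S.map e.toEquiv).supp \ {(S.map e.toEquiv).root} =
        e '' (S.supp \ {S.root}) := by
      rw [Set.image_sdiff e.injective, Set.image_singleton]; rfl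
    refine .intro _ (hwf.map _) (fun a ha b hb => ?_) (fun c hc w => ?_) (fun c hc => ?_)
    · obtain ⟨a, ha', rfl⟩ := ha
      obtain ⟨b, hb', rfl⟩ := hb
      exact (reachWithin_image_iff e).2 (hconn a ha' b hb')
    · obtain ⟨c, rfl⟩ := e.toEquiv.surjective c
      obtain ⟨w, rfl⟩ := e.toEquiv.surjective w
      rw [RTree.mem_map_descendants_iff, hcomp c ((RTree.map_parentRel_iff _ S).1 hc) w,
        hsupp_root, hsupp]
      simp [reachWithin_image_iff, e.injective.mem_set_image]
    · obtain ⟨c, rfl⟩ := e.toEquiv.surjective c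
      rw [← RTree.map_subtreeAt]
      exact ih c ((RTree.map_parentRel_iff _ S).1 hc)

theorem exists_adj_mem_map_descendants_iff (e : G ≃g G') (S : RTree V) (a x : V) :
    (∃ z ∈ (S.map e.toEquiv).descendants (e.toEquiv x), G'.Adj (e.toEquiv a) z) ↔
      ∃ z ∈ S.descendants x, G.Adj a z := by
  constructor
  · rintro ⟨z, hz, hadj⟩
    obtain ⟨z, rfl⟩ := e.toEquiv.surjective z
    exact ⟨z, (RTree.mem_map_descendants_iff _ S).1 hz, e.map_adj_iff.1 hadj⟩
  · rintro ⟨z, hz, hadj⟩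
    exact ⟨e z, (RTree.mem_map_descendants_iff e.toEquiv S).2 hz, e.map_adj_iff.2 hadj⟩

theorem rotate_map (e : G ≃g G') (S : RTree V) (a b : V) :
    (rotate G S a b).map e.toEquiv = rotate G' (S.map e.toEquiv) (e a) (e b) := by
  change _ = rotate G' (S.map e.toEquiv) (e.toEquiv a) (e.toEquiv b)
  refine RTree.ext rfl ?_ (funext fun w => ?_)
  · show e.toEquiv (if S.root = a then b else S.root) =
      if e.toEquiv S.root = e.toEquiv a then e.toEquiv b else e.toEquiv S.root
    simp only [EmbeddingLike.apply_eq_iff_eq]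
    split_ifs <;> rfl
  · obtain ⟨x, rfl⟩ := e.toEquiv.surjective w
    simp only [RTree.map_parent_apply, rotate, EmbeddingLike.apply_eq_iff_eq,
      exists_adj_mem_map_descendants_iff]
    have hpar : (S.parent x).map e.toEquiv = some (e.toEquiv b) ↔ S.parent x = some b := by
      simp
    simp only [hpar]
    split_ifs <;> rfl

theorem IsRotation.map (e : G ≃g G') {S S' : RTree V} (h : IsRotation G S S') :
    IsRotation G' (S.map e.toEquiv) (S'.map e.toEquiv) := by
  obtain ⟨a, b, hab, rfl⟩ := h
  exact ⟨e a, e b, (S.map_parentRel_iff e.toEquiv).2 hab, rotate_map e S a b⟩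

theorem IsSearchTree.map (e : G ≃g G') {S : RTree V} (h : IsSearchTree G S) :
    IsSearchTree G' (S.map e.toEquiv) :=
  ⟨by simp [RTree.map, h.1, Set.image_univ_of_surjective e.surjective], h.2.map e⟩

end GraphIso

namespace IsSearchTreeRec

variable {G : SimpleGraph V} {S : RTree V}

theorem wf (h : IsSearchTreeRec G S) : S.WF := by
  cases h; assumption

theorem isAncestor_or_isAncestor_of_adj (h : IsSearchTreeRec G S) {x y : V} (hxy : G.Adj x y)
    (hx : x ∈ S.supp) (hy : y ∈ S.supp) : S.isAncestor x y ∨ S.isAncestor y x := by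
  induction h generalizing x y with
  | intro S hwf _ hcomp _ ih =>
    by_cases hxr : x = S.root
    · exact Or.inl (hxr ▸ hwf.2.2.2.2 y hy)
    by_cases hyr : y = S.root
    · exact Or.inr (hyr ▸ hwf.2.2.2.2 x hx)
    obtain ⟨c, hc, hxc⟩ := hwf.exists_parent_eq_root_of_mem hx hxr
    have hyc : y ∈ S.descendants c := (hcomp c hc y).2
      ⟨hy, hyr, ((hcomp c hc x).1 hxc).2.2.tail ⟨⟨hx, hxr⟩, ⟨hy, hyr⟩, hxy⟩⟩
    exact (ih c hc hxy hxc hyc).imp RTree.isAncestor_of_subtreeAt RTree.isAncestor_of_subtreeAt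

-- A `G`-path from `c` to the root leaves the component of `c` through a neighbour of the root.
theorem exists_adj_root (h : IsSearchTreeRec G S) {c : V} (hc : S.parent c = some S.root) :
    ∃ z ∈ S.descendants c, G.Adj S.root z := by
  obtain ⟨S, hwf, hconn, hcomp, -⟩ := h
  have hcS : c ∈ S.supp := hwf.mem_of_parentRel hc
  have key : ∀ y, reachWithin G S.supp y S.root → y ∈ S.descendants c →
      ∃ z ∈ S.descendants c, G.Adj S.root z := by
    intro y hy
    induction hy using ReflTransGen.head_induction_on with
    | refl => exact fun hr => absurd rfl ((hcomp c hc _).1 hr).2.1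
    | @head y y' hstep _ ih =>
      intro hyc
      obtain ⟨hy, hy', hyy'⟩ := hstep
      by_cases hy'r : y' = S.root
      · exact ⟨y, hyc, hy'r ▸ hyy'.symm⟩
      obtain ⟨-, hyr, hcy⟩ := (hcomp c hc y).1 hyc
      exact ih ((hcomp c hc y').2 ⟨hy', hy'r, hcy.tail ⟨⟨hy, hyr⟩, ⟨hy', hy'r⟩, hyy'⟩⟩)
  exact key c (hconn c hcS S.root hwf.1) ⟨hcS, .refl⟩

theorem exists_adj_of_parent_eq (h : IsSearchTreeRec G S) {c x : V} (hc : S.parent c = some x) :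
    ∃ z ∈ S.descendants c, G.Adj x z := by
  induction h generalizing c x with
  | intro S hwf hconn hcomp hrec ih =>
    by_cases hxr : x = S.root
    · subst hxr
      exact (IsSearchTreeRec.intro S hwf hconn hcomp hrec).exists_adj_root hc
    obtain ⟨c₀, hc₀, hxc₀⟩ := hwf.exists_parent_eq_root_of_mem (hwf.mem_of_parentRel_right hc) hxr
    have hcc₀ : c ∈ S.descendants c₀ :=
      ⟨hwf.mem_of_parentRel hc, ReflTransGen.head (r := S.parentRel) hc hxc₀.2⟩
    have hne : c ≠ c₀ := by
      rintro rfl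
      exact hxr (Option.some.inj (hc.symm.trans hc₀))
    obtain ⟨z, hz, hxz⟩ := ih c₀ hc₀ ((RTree.subtreeAt_parent_of_mem hcc₀ hne).trans hc)
    exact ⟨z, RTree.descendants_subtreeAt_subset c₀ c hz, hxz⟩

end IsSearchTreeRec

section Rotation

variable {G : SimpleGraph V} {S : RTree V} {a b : V}

theorem rotate_parent_left (hne : a ≠ b) : (rotate G S a b).parent a = some b := by
  simp [rotate, hne]

theorem rotate_parent_right : (rotate G S a b).parent b = S.parent a := by
  simp [rotate]

theorem rotate_parent_of_parent_eq {w : V} (hwb : w ≠ b) (hwa : w ≠ a)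
    (hw : S.parent w = some b) : (rotate G S a b).parent w =
      if ∃ z ∈ S.descendants w, G.Adj a z then some a else some b := by
  simp [rotate, hwb, hwa, hw]

theorem rotate_parent_of_parent_ne {w : V} (hwb : w ≠ b) (hwa : w ≠ a)
    (hw : S.parent w ≠ some b) : (rotate G S a b).parent w = S.parent w := by
  simp [rotate, hwb, hwa, hw]

-- Only `a` can drop out of the ancestors of `w`, and then `b` is still above `w`: the step
-- `b → a` becomes `b → parent a`, and a reattached child of `b` reaches `b` via `a` or directly.
theorem isAncestor_rotate_of_isAncestor (hab : S.parent b = some a) (hne : a ≠ b) {x w : V}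
    (h : S.isAncestor x w) : (rotate G S a b).isAncestor (if x = a then b else x) w := by
  have hab' : (rotate G S a b).parentRel a b := rotate_parent_left hne
  induction h with
  | refl =>
    split_ifs with hwa
    · rw [hwa]; exact .single hab'
    · exact .refl
  | @tail y x _ hyx ih =>
    by_cases hya : y = a
    · subst hya
      rw [if_pos rfl] at ih
      split_ifs with hxa
      · exact ih
      · exact ih.tail (rotate_parent_right.trans hyx)
    rw [if_neg hya] at ih
    by_cases hyb : y = b
    · subst hyb
      rw [S.parentRel_rightUnique hyx hab, if_pos rfl]
      exact ih
    by_cases hxb : x = b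
    · subst hxb
      rw [if_neg hne.symm]
      have hy := rotate_parent_of_parent_eq (G := G) hyb hya hyx
      split_ifs at hy
      · exact (ih.tail hy).tail hab'
      · exact ih.tail hy
    have hy : (rotate G S a b).parentRel y x :=
      (rotate_parent_of_parent_ne hyb hya fun h => hxb (Option.some.inj (hyx.symm.trans h))).trans
        hyx
    split_ifs with hxa
    · exact (ih.tail (hxa ▸ hy)).tail hab'
    · exact ih.tail hy

theorem isAncestor_rotate_of_ne (hab : S.parent b = some a) (hne : a ≠ b) {x w : V} (hxa : x ≠ a)
    (h : S.isAncestor x w) : (rotate G S a b).isAncestor x w := by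
  simpa [hxa] using isAncestor_rotate_of_isAncestor (G := G) hab hne h

end Rotation

namespace IsSearchTree

variable {G : SimpleGraph V} {S : RTree V}

theorem wf (hS : IsSearchTree G S) : S.WF := hS.2.wf

theorem mem (hS : IsSearchTree G S) (x : V) : x ∈ S.supp := hS.1 ▸ Set.mem_univ x

theorem isAncestor_or_isAncestor (hS : IsSearchTree G S) {u v : V} (huv : G.Adj u v) :
    S.isAncestor u v ∨ S.isAncestor v u :=
  hS.2.isAncestor_or_isAncestor_of_adj huv (hS.mem u) (hS.mem v)

theorem isAncestor_iff_not_isAncestor (hS : IsSearchTree G S) {u v : V} (huv : G.Adj u v) :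
    S.isAncestor v u ↔ ¬ S.isAncestor u v :=
  ⟨fun hvu huv' => huv.ne (hS.wf.eq_of_reflTransGen_of_reflTransGen hvu huv'),
    (hS.isAncestor_or_isAncestor huv).resolve_left⟩

theorem isAncestor_rotate (hS : IsSearchTree G S) {a b u v : V} (hab : S.parent b = some a)
    (huv : G.Adj u v) (hpair : ¬(a = u ∧ b = v)) (h : S.isAncestor u v) :
    (rotate G S a b).isAncestor u v := by
  have hne : a ≠ b := fun h => hS.wf.parentRel_irrefl a (h ▸ hab)
  by_cases hua : u = a
  swap
  · exact isAncestor_rotate_of_ne hab hne hua h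
  subst hua
  by_cases hvb : S.isAncestor b v
  · obtain ⟨c, hvc, hcb⟩ := hvb.cases_tail.resolve_left fun hvb => hpair ⟨rfl, hvb⟩
    have hcu : c ≠ u := by
      rintro rfl
      exact hS.wf.not_transGen_self c (TransGen.head hcb (TransGen.single hab))
    have hcb' : c ≠ b := fun h => hS.wf.parentRel_irrefl b (h ▸ hcb)
    have hcu' : (rotate G S u b).parentRel c u := by
      rw [RTree.parentRel, rotate_parent_of_parent_eq hcb' hcu hcb,
        if_pos ⟨v, ⟨hS.mem v, hvc⟩, huv⟩]
    exact (isAncestor_rotate_of_ne hab hne hcu hvc).tail hcu'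
  · obtain ⟨y, hvy, hyu⟩ := h.cases_tail.resolve_left huv.ne
    have hyb : y ≠ b := fun hyb => hvb (hyb ▸ hvy)
    have hyu' : y ≠ u := fun h => hS.wf.parentRel_irrefl u (h ▸ hyu)
    have hyu'' : (rotate G S u b).parentRel y u :=
      (rotate_parent_of_parent_ne hyb hyu' fun h => hne (Option.some.inj (hyu.symm.trans h))).trans
        hyu
    exact (isAncestor_rotate_of_ne hab hne hyu' hvy).tail hyu''

end IsSearchTree

section Twins

variable {G : SimpleGraph V} {u v : V}

noncomputable def swapIsoOfTwins (htwin : ∀ z, z ≠ u → z ≠ v → (G.Adj u z ↔ G.Adj v z)) :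
    G ≃g G where
  toEquiv := Equiv.swap u v
  map_rel_iff' := by
    intro a b
    simp only [Equiv.swap_apply_def]
    grind [SimpleGraph.adj_comm, SimpleGraph.irrefl]

namespace IsSearchTree

variable {S : RTree V} (hS : IsSearchTree G S)
  (htwin : ∀ z, z ≠ u → z ≠ v → (G.Adj u z ↔ G.Adj v z)) (hvu : S.parent v = some u)
include hS htwin hvu

-- Another child `w` of `u` would have a neighbour `z` of `u`, hence of `v`, below it; then `v`
-- and `z` are comparable, which makes `v` and `w` comparable.
theorem eq_of_parent_eq_of_twins {w : V} (hwu : S.parent w = some u) : w = v := by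
  obtain ⟨z, ⟨-, hzw⟩, huz⟩ := hS.2.exists_adj_of_parent_eq hwu
  have hzu : z ≠ u := by
    rintro rfl
    exact hS.wf.not_transGen_self w (TransGen.head' hwu hzw)
  have hcomparable : ReflTransGen S.parentRel v w ∨ ReflTransGen S.parentRel w v := by
    by_cases hzv : z = v
    · exact .inl (hzv ▸ hzw)
    rcases hS.isAncestor_or_isAncestor ((htwin z hzu hzv).1 huz) with hzv' | hvz
    · exact (ReflTransGen.total_of_right_unique S.parentRel_rightUnique hzw hzv').symm
    · exact .inl (hvz.trans hzw)
  rcases hcomparable with h | h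
  · exact (hS.wf.eq_of_reflTransGen_of_parentRel hvu hwu h).symm
  · exact hS.wf.eq_of_reflTransGen_of_parentRel hwu hvu h

theorem exists_adj_of_parent_eq_of_twins {w : V} (hwv : S.parent w = some v) :
    ∃ z ∈ S.descendants w, G.Adj u z := by
  obtain ⟨z, hz, hvz⟩ := hS.2.exists_adj_of_parent_eq hwv
  have hzv : z ≠ v := by
    rintro rfl
    exact hS.wf.not_transGen_self w (TransGen.head' hwv hz.2)
  have hzu : z ≠ u := by
    rintro rfl
    exact hS.wf.not_transGen_self w (TransGen.head hwv (TransGen.head' hvu hz.2))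
  exact ⟨z, hz, (htwin z hzu hzv).2 hvz⟩

theorem rotate_eq_map_swap : rotate G S u v = S.map (Equiv.swap u v) := by
  have hfix : ∀ o : Option V, o ≠ some u → o ≠ some v → o.map (Equiv.swap u v) = o := by
    rintro (_ | p) hpu hpv
    · rfl
    · simp_all [Equiv.swap_apply_of_ne_of_ne]
  have huv : u ≠ v := fun h => hS.wf.parentRel_irrefl u (h ▸ hvu)
  refine RTree.ext ?_ ?_ (funext fun w => ?_)
  · show S.supp = Equiv.swap u v '' S.supp
    rw [hS.1, Set.image_univ_of_surjective (Equiv.swap u v).surjective]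
  · have hrv : S.root ≠ v := fun h => by simp [← h, hS.wf.2.1] at hvu
    show (if S.root = u then v else S.root) = Equiv.swap u v S.root
    split_ifs with hru
    · rw [hru, Equiv.swap_apply_left]
    · rw [Equiv.swap_apply_of_ne_of_ne hru hrv]
  · obtain ⟨x, rfl⟩ := (Equiv.swap u v).surjective w
    rw [RTree.map_parent_apply]
    by_cases hxu : x = u
    · subst hxu
      rw [Equiv.swap_apply_left, rotate_parent_right]
      refine (hfix _ (fun h => hS.wf.parentRel_irrefl x h) fun h => ?_).symm
      exact hS.wf.not_transGen_self x (TransGen.head h (TransGen.single hvu))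
    by_cases hxv : x = v
    · subst hxv
      rw [Equiv.swap_apply_right, rotate_parent_left huv, hvu]
      simp
    rw [Equiv.swap_apply_of_ne_of_ne hxu hxv]
    by_cases hxv' : S.parent x = some v
    · rw [rotate_parent_of_parent_eq hxv hxu hxv',
        if_pos (hS.exists_adj_of_parent_eq_of_twins htwin hvu hxv'), hxv']
      simp
    · rw [rotate_parent_of_parent_ne hxv hxu hxv',
        hfix _ (fun h => hxv (hS.eq_of_parent_eq_of_twins htwin hvu h)) hxv']

end IsSearchTree

end Twins

namespace IsSearchTree

variable {G : SimpleGraph V} {S S' : RTree V} {u v : V}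

theorem eq_map_swap_of_isUVStep (hS : IsSearchTree G S)
    (htwin : ∀ z, z ≠ u → z ≠ v → (G.Adj u z ↔ G.Adj v z)) (h : isUVStep G u v S S') :
    S' = S.map (Equiv.swap u v) := by
  rcases h with ⟨hvu, rfl⟩ | ⟨huv, rfl⟩
  · exact hS.rotate_eq_map_swap htwin hvu
  · rw [hS.rotate_eq_map_swap (fun z hzv hzu => (htwin z hzu hzv).symm) huv, Equiv.swap_comm]

theorem isAncestor_iff_of_isRotation (hS : IsSearchTree G S) (hS' : IsSearchTree G S')
    (huv : G.Adj u v) (htwin : ∀ z, z ≠ u → z ≠ v → (G.Adj u z ↔ G.Adj v z))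
    (hrot : IsRotation G S S') :
    S'.isAncestor u v ↔ (S.isAncestor u v ↔ ¬ isUVStep G u v S S') := by
  by_cases hstep : isUVStep G u v S S'
  · have hswap : (S.map (Equiv.swap u v)).isAncestor u v ↔ S.isAncestor v u := by
      simpa using S.map_isAncestor_iff (Equiv.swap u v) (x := v) (y := u)
    simp only [hstep, not_true_eq_false, iff_false]
    rw [hS.eq_map_swap_of_isUVStep htwin hstep, hswap, hS.isAncestor_iff_not_isAncestor huv]
  obtain ⟨a, b, hab, rfl⟩ := hrot
  have huv' : ¬(a = u ∧ b = v) := fun ⟨ha, hb⟩ => hstep (.inl ⟨ha ▸ hb ▸ hab, ha ▸ hb ▸ rfl⟩)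
  have hvu' : ¬(a = v ∧ b = u) := fun ⟨ha, hb⟩ => hstep (.inr ⟨ha ▸ hb ▸ hab, ha ▸ hb ▸ rfl⟩)
  simp only [hstep, not_false_eq_true, iff_true]
  refine ⟨fun h => ?_, hS.isAncestor_rotate hab huv huv'⟩
  by_contra hn
  exact (hS'.isAncestor_iff_not_isAncestor huv).1
    (hS.isAncestor_rotate hab huv.symm hvu' ((hS.isAncestor_iff_not_isAncestor huv).2 hn)) h

end IsSearchTree

section Walks

variable {α : Type*} {R : α → α → Prop} {σ : α → α} {n : ℕ} {W : ℕ → α}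

-- Between two `σ`-steps at `k₁ < k₂`, replace `W` by its `σ`-image: the two `σ`-steps drop out.
theorem exists_walk_sub_two_of_two_steps (hσ : ∀ x y, R x y → R (σ x) (σ y))
    (hW : ∀ k < n, R (W k) (W (k + 1))) {k₁ k₂ : ℕ} (hk : k₁ < k₂) (hk₂ : k₂ < n)
    (h₁ : σ (W (k₁ + 1)) = W k₁) (h₂ : σ (W k₂) = W (k₂ + 1)) :
    ∃ W' : ℕ → α, W' 0 = W 0 ∧ W' (n - 2) = W n ∧ ∀ k < n - 2, R (W' k) (W' (k + 1)) := by
  let W' : ℕ → α := fun j => if j < k₁ then W j else if j < k₂ then σ (W (j + 1)) else W (j + 2)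
  refine ⟨W', ?_, ?_, fun k hk => ?_⟩
  · by_cases h : 0 < k₁
    · simp [W', h]
    · obtain rfl : k₁ = 0 := by omega
      simp [W', hk, h₁]
  · by_cases h : n - 2 < k₂
    · obtain rfl : k₂ = n - 1 := by omega
      simp only [W', show ¬ n - 2 < k₁ by omega, h, if_false, if_true]
      rw [show n - 2 + 1 = n - 1 by omega, h₂, show n - 1 + 1 = n by omega]
    · simp only [W', show ¬ n - 2 < k₁ by omega, h, if_false, show n - 2 + 2 = n by omega]
  rcases lt_trichotomy (k + 1) k₁ with hk₁ | rfl | hk₁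
  · simp only [W', if_pos hk₁, if_pos (show k < k₁ by omega)]
    exact hW k (by omega)
  · simp only [W', lt_add_one, lt_irrefl, if_true, if_false, if_pos hk]
    rw [h₁]
    exact hW k (by omega)
  rcases lt_trichotomy (k + 1) k₂ with hk₂' | rfl | hk₂'
  · simp only [W', show ¬ k < k₁ by omega, show ¬ k + 1 < k₁ by omega, if_pos hk₂',
      if_pos (show k < k₂ by omega), if_false]
    exact hσ _ _ (hW (k + 1) (by omega))
  · simp only [W', show ¬ k < k₁ by omega, show ¬ k + 1 < k₁ by omega, lt_add_one, lt_irrefl,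
      if_true, if_false]
    rw [h₂]
    exact hW (k + 2) (by omega)
  · simp only [W', show ¬ k < k₁ by omega, show ¬ k + 1 < k₁ by omega,
      show ¬ k < k₂ by omega, show ¬ k + 1 < k₂ by omega, if_false]
    exact hW (k + 2) (by omega)

theorem card_filter_le_one_of_shortest (hσ : ∀ x y, R x y → R (σ x) (σ y))
    (hσσ : ∀ x, σ (σ x) = x) (hW : ∀ k < n, R (W k) (W (k + 1)))
    (hmin : ∀ (m : ℕ) (W' : ℕ → α), W' 0 = W 0 → W' m = W n →
      (∀ k < m, R (W' k) (W' (k + 1))) → n ≤ m)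
    {Q : ℕ → Prop} [DecidablePred Q] (hQ : ∀ k < n, Q k → W (k + 1) = σ (W k)) :
    ((Finset.range n).filter Q).card ≤ 1 := by
  have hnot : ∀ k₁ k₂, k₁ < k₂ → k₂ < n → Q k₁ → Q k₂ → False := by
    intro k₁ k₂ hk hk₂ hQ₁ hQ₂
    obtain ⟨W', h0, hn, hW'⟩ := exists_walk_sub_two_of_two_steps hσ hW hk hk₂
      (by rw [hQ k₁ (by omega) hQ₁, hσσ]) (hQ k₂ hk₂ hQ₂).symm
    have := hmin (n - 2) W' h0 hn hW'
    omega
  refine Finset.card_le_one.2 fun k₁ hk₁ k₂ hk₂ => ?_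
  simp only [Finset.mem_filter, Finset.mem_range] at hk₁ hk₂
  by_contra hne
  rcases Nat.lt_or_gt_of_ne hne with h | h
  · exact hnot k₁ k₂ h hk₂.1 hk₁.2 hk₂.2
  · exact hnot k₂ k₁ h hk₁.1 hk₂.2 hk₁.2

theorem iff_iff_even_card_filter {P Q : ℕ → Prop} [DecidablePred Q]
    (h : ∀ k < n, (P (k + 1) ↔ (P k ↔ ¬ Q k))) :
    P n ↔ (P 0 ↔ Even ((Finset.range n).filter Q).card) := by
  induction n with
  | zero => simp
  | succ n ih =>
    rw [h n n.lt_add_one, ih fun k hk => h k (by omega), Finset.range_add_one,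
      Finset.filter_insert]
    split_ifs with hQ
    · rw [Finset.card_insert_of_notMem (by simp), Nat.even_add_one]
      tauto
    · tauto

end Walks

theorem shortestPath_uv_rotations_trueTwins_general {V : Type u} (G : SimpleGraph V)
    (u v : V) (hadj : G.Adj u v)
    (htwin : ∀ z, z ≠ u → z ≠ v → (G.Adj u z ↔ G.Adj v z))
    (T T' : RTree V) (hT' : IsSearchTree G T')
    (n : ℕ) (Wk : ℕ → RTree V) (h0 : Wk 0 = T) (hn : Wk n = T')
    (hwalk : ∀ k < n, IsSearchTree G (Wk k) ∧ IsRotation G (Wk k) (Wk (k + 1)))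
    (hmin : ∀ (m : ℕ) (Wk' : ℕ → RTree V), Wk' 0 = T → Wk' m = T' →
      (∀ k < m, IsSearchTree G (Wk' k) ∧ IsRotation G (Wk' k) (Wk' (k + 1))) → n ≤ m) :
    (diffRelOrder T T' u v →
      ((Finset.range n).filter
        (fun k => isUVStep G u v (Wk k) (Wk (k + 1)))).card = 1)
    ∧ (¬ diffRelOrder T T' u v →
      ((Finset.range n).filter
        (fun k => isUVStep G u v (Wk k) (Wk (k + 1)))).card = 0) := by
  have hST : ∀ k ≤ n, IsSearchTree G (Wk k) := fun k hk =>
    (Nat.lt_or_eq_of_le hk).elim (fun hk => (hwalk k hk).1) fun hk => hk ▸ hn ▸ hT'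
  have hcard := card_filter_le_one_of_shortest
    (R := fun S S' => IsSearchTree G S ∧ IsRotation G S S') (σ := RTree.map (Equiv.swap u v))
    (fun _ _ h => ⟨h.1.map (swapIsoOfTwins htwin), h.2.map (swapIsoOfTwins htwin)⟩)
    (fun S => by simpa using S.map_symm_map (Equiv.swap u v))
    hwalk (h0 ▸ hn ▸ hmin) fun k hk h => (hST k hk.le).eq_map_swap_of_isUVStep htwin h
  have hparity := iff_iff_even_card_filter (P := fun k => (Wk k).isAncestor u v) fun k hk =>
    (hST k hk.le).isAncestor_iff_of_isRotation (hST (k + 1) hk) hadj htwin (hwalk k hk).2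
  rw [h0, hn] at hparity
  rcases Nat.le_one_iff_eq_zero_or_eq_one.1 hcard with h | h <;>
    simp [h, diffRelOrder] at hparity ⊢ <;> tauto

/-- if `u`, `v` are true twins of `G`, every shortest path between search
trees `T` and `T'` in `R(G)` contains exactly one `uv`-rotation edge if `u`, `v` have
different relative order in `T` and `T'`, and none otherwise. -/
theorem shortestPath_uv_rotations_trueTwins {V : Type u} [Fintype V] (G : SimpleGraph V)
    (hG : G.Connected) (u v : V) (hne : u ≠ v) (hadj : G.Adj u v)
    (htwin : ∀ z, z ≠ u → z ≠ v → (G.Adj u z ↔ G.Adj v z))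
    (T T' : RTree V) (hT : IsSearchTree G T) (hT' : IsSearchTree G T')
    (n : ℕ) (Wk : ℕ → RTree V) (h0 : Wk 0 = T) (hn : Wk n = T')
    (hwalk : ∀ k < n, IsSearchTree G (Wk k) ∧ IsRotation G (Wk k) (Wk (k + 1)))
    (hpath : ∀ k l, k ≤ n → l ≤ n → Wk k = Wk l → k = l)
    (hmin : ∀ (m : ℕ) (Wk' : ℕ → RTree V), Wk' 0 = T → Wk' m = T' →
      (∀ k < m, IsSearchTree G (Wk' k) ∧ IsRotation G (Wk' k) (Wk' (k + 1))) → n ≤ m) :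
    (diffRelOrder T T' u v →
      ((Finset.range n).filter
        (fun k => isUVStep G u v (Wk k) (Wk (k + 1)))).card = 1)
    ∧ (¬ diffRelOrder T T' u v →
      ((Finset.range n).filter
        (fun k => isUVStep G u v (Wk k) (Wk (k + 1)))).card = 0) :=
  shortestPath_uv_rotations_trueTwins_general G u v hadj htwin T T' hT' n Wk h0 hn hwalk hmin
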